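/- arXiv:1907.06325 — 3 statements merged into one kernel-verified Lean document; each statement's English description precedes it below -/
import Mathlib

section
/- Let X be a transitive subshift with a recurrent transitive point x. Suppose a^∞ ∈ X for a letter a, X ≠ {a^∞}, and every word in X of the form a s or s a with s ≠ a has s = b for a fixed marker symbol b. Then for every n ∈ ℕ, the word a^n is both right-special and left-special in X. -/
open Filter Topology MeasureTheory

variable {A : Type*} {B : Type*}

/-- The shift by `m` on bi-infinite sequences. -/
def shiftBy (m : ℤ) (x : ℤ → A) : ℤ → A := fun i => x (i + m)

/-- The orbit closure of a point. -/
def orbitClosure [TopologicalSpace A] (x : ℤ → A) : Set (ℤ → A) :=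
  closure {y | ∃ m : ℤ, y = shiftBy m x}

/-- A set of sequences invariant under all shifts. -/
def ShiftInvariant (X : Set (ℤ → A)) : Prop := ∀ m : ℤ, ∀ y ∈ X, shiftBy m y ∈ X

/-- A subshift: closed and shift-invariant. -/
def IsSubshift [TopologicalSpace A] (X : Set (ℤ → A)) : Prop :=
  IsClosed X ∧ ShiftInvariant X

/-- The word `w` occurs in `x` at position `i`. -/
def occursAt (x : ℤ → A) (w : List A) (i : ℤ) : Prop :=
  ∀ k : Fin w.length, x (i + (k.val : ℤ)) = w.get k

/-- The word `w` occurs somewhere in some point of `X`. -/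
def WordIn (X : Set (ℤ → A)) (w : List A) : Prop :=
  ∃ x ∈ X, ∃ i : ℤ, occursAt x w i

/-- The language of `X` in length `n`. -/
def langOf (X : Set (ℤ → A)) (n : ℕ) : Set (List A) :=
  {w | w.length = n ∧ WordIn X w}

/-- The complexity function of `X`. -/
noncomputable def complexity (X : Set (ℤ → A)) (n : ℕ) : ℕ := (langOf X n).ncard

/-- `w` is right-special in `X`. -/
def RightSpecial (X : Set (ℤ → A)) (w : List A) : Prop :=
  ∃ a b : A, a ≠ b ∧ WordIn X (w ++ [a]) ∧ WordIn X (w ++ [b])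

/-- `w` is left-special in `X`. -/
def LeftSpecial (X : Set (ℤ → A)) (w : List A) : Prop :=
  ∃ a b : A, a ≠ b ∧ WordIn X (a :: w) ∧ WordIn X (b :: w)

/-- The set of right-special words of length `n`. -/
def RS (X : Set (ℤ → A)) (n : ℕ) : Set (List A) :=
  {w | w.length = n ∧ RightSpecial X w}

/-- The length-`ℓ` word of `x` starting at position `i`. -/
def wordAt (x : ℤ → A) (i : ℤ) (ℓ : ℕ) : List A :=
  List.ofFn (fun t : Fin ℓ => x (i + (t.val : ℤ)))

/-- `x` is a recurrent point: every word in it occurs infinitely often. -/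
def RecurrentPt (x : ℤ → A) : Prop :=
  ∀ n : ℕ, ∀ i N : ℤ, ∃ j : ℤ, N ≤ j ∧ ∀ k : ℕ, k < n → x (j + k) = x (i + k)

/-- `x` is eventually periodic to the right. -/
def EventuallyPeriodicRight (x : ℤ → A) : Prop :=
  ∃ p : ℤ, 0 < p ∧ ∃ N : ℤ, ∀ i : ℤ, N < i → x (i + p) = x i

/-- `x` is eventually periodic to the left. -/
def EventuallyPeriodicLeft (x : ℤ → A) : Prop :=
  ∃ p : ℤ, 0 < p ∧ ∃ N : ℤ, ∀ i : ℤ, i < N → x (i - p) = x i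

/-- `M` is a minimal subsystem of `X`. -/
def MinimalSubsystem [TopologicalSpace A] (X M : Set (ℤ → A)) : Prop :=
  M ⊆ X ∧ M.Nonempty ∧ IsClosed M ∧ ShiftInvariant M ∧
    ∀ M' ⊆ M, M'.Nonempty → IsClosed M' → ShiftInvariant M' → M' = M

/-- `x` is a generic point for the measure `μ`. -/
def GenericFor [TopologicalSpace A] [MeasurableSpace A] (x : ℤ → A)
    (μ : Measure (ℤ → A)) : Prop :=
  ∀ f : (ℤ → A) → ℝ, Continuous f →
    Tendsto (fun N : ℕ => (∑ i ∈ Finset.range N, f (shiftBy i x)) / (N : ℝ)) atTop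
      (𝓝 (∫ y, f y ∂μ))

/-- `μ` is a generic measure for `X`. -/
def GenericMeasure [TopologicalSpace A] [MeasurableSpace A] (X : Set (ℤ → A))
    (μ : Measure (ℤ → A)) : Prop :=
  ∃ x ∈ X, GenericFor x μ

/-!
The point `x` contains `a ^ n`, since `a^∞` lies in its orbit closure. If `a ^ n` were not
right-special, every occurrence of `a ^ n` in `x` would be followed by `a`, so one occurrence
spreads to the right and `x` is constantly `a` on a half-line; by recurrence every letter of `x`
reappears on that half-line, so `x = a^∞` and `X = {a^∞}`. Symmetrically, if `a ^ n` were not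
left-special, occurrences spread to the left, and recurrence places one to the right of any
given position.
-/

section Words

variable {x : ℤ → A} {i : ℤ}

theorem occursAt_replicate_iff {n : ℕ} {a : A} :
    occursAt x (List.replicate n a) i ↔ ∀ k : ℕ, k < n → x (i + k) = a := by
  simp [occursAt, Fin.forall_iff]

theorem occursAt_append_singleton_iff {w : List A} {c : A} :
    occursAt x (w ++ [c]) i ↔ occursAt x w i ∧ x (i + w.length) = c := by
  simp only [occursAt, Fin.forall_iff, List.get_eq_getElem, List.length_append,
    List.length_singleton]
  constructor
  · intro h
    refine ⟨fun k hk => by simpa [List.getElem_append_left hk] using h k (by omega), ?_⟩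
    simpa using h w.length (by omega)
  · rintro ⟨hw, hc⟩ k hk
    rcases Nat.lt_succ_iff_lt_or_eq.mp hk with hk | rfl
    · simpa [List.getElem_append_left hk] using hw k hk
    · simpa using hc

theorem occursAt_cons_iff {w : List A} {c : A} :
    occursAt x (c :: w) i ↔ x i = c ∧ occursAt x w (i + 1) := by
  simp only [occursAt, Fin.forall_iff, List.get_eq_getElem, List.length_cons]
  constructor
  · intro h
    refine ⟨by simpa using h 0 (by omega), fun k hk => ?_⟩
    simpa [add_assoc, add_comm (1 : ℤ)] using h (k + 1) (by omega)
  · rintro ⟨hc, hw⟩ k hk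
    rcases k with _ | k
    · simpa using hc
    · simpa [add_assoc, add_comm (1 : ℤ)] using hw k (by omega)

end Words

section Runs

variable {x : ℤ → A} {a : A} {n : ℕ}

theorem occursAt_replicate_add_of_forall_succ
    (hsucc : ∀ j, occursAt x (List.replicate n a) j → x (j + n) = a) {i : ℤ}
    (hi : occursAt x (List.replicate n a) i) (d : ℕ) :
    occursAt x (List.replicate n a) (i + d) := by
  induction d with
  | zero => simpa using hi
  | succ d ih =>
    have hrun := occursAt_replicate_iff.mp ih
    have hnext := hsucc _ ih
    refine occursAt_replicate_iff.mpr fun k hk => ?_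
    rcases Nat.lt_or_ge (k + 1) n with hk' | hk'
    · simpa [add_assoc, add_comm (1 : ℤ)] using hrun (k + 1) hk'
    · rw [show i + ↑(d + 1) + ↑k = i + d + n by push_cast; omega]
      exact hnext

theorem occursAt_replicate_sub_of_forall_pred
    (hpred : ∀ j, occursAt x (List.replicate n a) j → x (j - 1) = a) {i : ℤ}
    (hi : occursAt x (List.replicate n a) i) (d : ℕ) :
    occursAt x (List.replicate n a) (i - d) := by
  induction d with
  | zero => simpa using hi
  | succ d ih =>
    have hrun := occursAt_replicate_iff.mp ih
    have hprev := hpred _ ih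
    refine occursAt_replicate_iff.mpr fun k hk => ?_
    rcases k with _ | k
    · simpa [sub_add_eq_sub_sub] using hprev
    · rw [show i - ↑(d + 1) + ↑(k + 1) = i - d + k by push_cast; ring]
      exact hrun k (by omega)

end Runs

section Special

variable {X : Set (ℤ → A)} {w : List A} {c s : A}

theorem eq_of_not_rightSpecial (hw : ¬ RightSpecial X w) (hc : WordIn X (w ++ [c]))
    (hs : WordIn X (w ++ [s])) : s = c := by
  by_contra hsc
  exact hw ⟨c, s, Ne.symm hsc, hc, hs⟩

theorem eq_of_not_leftSpecial (hw : ¬ LeftSpecial X w) (hc : WordIn X (c :: w))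
    (hs : WordIn X (s :: w)) : s = c := by
  by_contra hsc
  exact hw ⟨c, s, Ne.symm hsc, hc, hs⟩

theorem wordIn_replicate_of_const_mem {a : A} (ha : (fun _ : ℤ => a) ∈ X) (n : ℕ) :
    WordIn X (List.replicate n a) :=
  ⟨_, ha, 0, occursAt_replicate_iff.mpr fun _ _ => rfl⟩

end Special

section OrbitClosure

variable [TopologicalSpace A]

theorem mem_orbitClosure_self (x : ℤ → A) : x ∈ orbitClosure x :=
  subset_closure ⟨0, by funext i; simp [shiftBy]⟩

theorem orbitClosure_const [T1Space A] (a : A) :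
    orbitClosure (fun _ : ℤ => a) = {fun _ : ℤ => a} := by
  have horbit : {y : ℤ → A | ∃ m : ℤ, y = shiftBy m (fun _ : ℤ => a)} = {fun _ : ℤ => a} :=
    Set.eq_singleton_iff_unique_mem.mpr ⟨⟨0, rfl⟩, fun _ ⟨_, hy⟩ => hy⟩
  rw [orbitClosure, horbit, closure_singleton]

theorem exists_occursAt_of_mem_orbitClosure [DiscreteTopology A] {x y : ℤ → A}
    (hy : y ∈ orbitClosure x) {w : List A} {i : ℤ} (hw : occursAt y w i) :
    ∃ j, occursAt x w j := by
  have hcyl : IsOpen {z : ℤ → A | occursAt z w i} := by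
    have hinter : {z : ℤ → A | occursAt z w i} =
        ⋂ k : Fin w.length, (fun z : ℤ → A => z (i + k)) ⁻¹' {w.get k} := by
      ext; simp [occursAt]
    rw [hinter]
    exact isOpen_iInter_of_finite fun k =>
      (continuous_apply _).isOpen_preimage _ (isOpen_discrete _)
  obtain ⟨_, hz, m, rfl⟩ := mem_closure_iff.mp hy _ hcyl hw
  exact ⟨i + m, fun k => by simpa [shiftBy, add_right_comm] using hz k⟩

end OrbitClosure

section Recurrence

variable {X : Set (ℤ → A)} {x : ℤ → A} {a : A} {n : ℕ} {i : ℤ}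

theorem eq_of_occursAt_replicate (hn : 0 < n) (hi : occursAt x (List.replicate n a) i) :
    x i = a := by
  simpa using occursAt_replicate_iff.mp hi 0 hn

theorem rightSpecial_replicate_of_recurrent (hrec : RecurrentPt x) (hxX : x ∈ X)
    (ha : (fun _ : ℤ => a) ∈ X) (hx : ∃ t, x t ≠ a) (hn : 0 < n)
    (hi : occursAt x (List.replicate n a) i) : RightSpecial X (List.replicate n a) := by
  by_contra hR
  have hsucc : ∀ j, occursAt x (List.replicate n a) j → x (j + n) = a := fun j hj =>
    eq_of_not_rightSpecial hR
      (by rw [← List.replicate_succ']; exact wordIn_replicate_of_const_mem ha _)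
      ⟨x, hxX, j, occursAt_append_singleton_iff.mpr ⟨hj, by simp⟩⟩
  have hright : ∀ t, i ≤ t → x t = a := fun t ht => by
    have hocc := occursAt_replicate_add_of_forall_succ hsucc hi (t - i).toNat
    rw [Int.toNat_of_nonneg (by omega), add_sub_cancel] at hocc
    exact eq_of_occursAt_replicate hn hocc
  obtain ⟨t, ht⟩ := hx
  obtain ⟨j, hij, hj⟩ := hrec 1 t i
  have hjt : x j = x t := by simpa using hj 0 one_pos
  exact ht (hjt ▸ hright j hij)

theorem leftSpecial_replicate_of_recurrent (hrec : RecurrentPt x) (hxX : x ∈ X)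
    (ha : (fun _ : ℤ => a) ∈ X) (hx : ∃ t, x t ≠ a) (hn : 0 < n)
    (hi : occursAt x (List.replicate n a) i) : LeftSpecial X (List.replicate n a) := by
  by_contra hL
  have hpred : ∀ j, occursAt x (List.replicate n a) j → x (j - 1) = a := fun j hj =>
    eq_of_not_leftSpecial hL (wordIn_replicate_of_const_mem ha (n + 1))
      ⟨x, hxX, j - 1, occursAt_cons_iff.mpr ⟨rfl, by simpa using hj⟩⟩
  obtain ⟨t, ht⟩ := hx
  obtain ⟨j, htj, hji⟩ := hrec n i t
  have hj : occursAt x (List.replicate n a) j := occursAt_replicate_iff.mpr fun k hk =>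
    (hji k hk).trans (occursAt_replicate_iff.mp hi k hk)
  have hocc := occursAt_replicate_sub_of_forall_pred hpred hj (j - t).toNat
  rw [Int.toNat_of_nonneg (by omega), sub_sub_cancel] at hocc
  exact ht (eq_of_occursAt_replicate hn hocc)

end Recurrence

theorem stmt3_general [TopologicalSpace A] [DiscreteTopology A]
    (x : ℤ → A) (X : Set (ℤ → A)) (hX : X = orbitClosure x) (hrec : RecurrentPt x)
    (a : A) (ha : (fun _ : ℤ => a) ∈ X) (hne : X ≠ {fun _ : ℤ => a}) :
    ∀ n : ℕ, 1 ≤ n →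
      RightSpecial X (List.replicate n a) ∧ LeftSpecial X (List.replicate n a) := by
  intro n hn
  subst hX
  have hx : ∃ t, x t ≠ a := by
    by_contra! hxa
    exact hne (by rw [funext hxa, orbitClosure_const])
  obtain ⟨i, hi⟩ := exists_occursAt_of_mem_orbitClosure ha
    (occursAt_replicate_iff (i := 0) (n := n).mpr fun _ _ => rfl)
  exact ⟨rightSpecial_replicate_of_recurrent hrec (mem_orbitClosure_self x) ha hx hn hi,
    leftSpecial_replicate_of_recurrent hrec (mem_orbitClosure_self x) ha hx hn hi⟩

theorem stmt3 [Fintype A] [TopologicalSpace A] [DiscreteTopology A]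
    (x : ℤ → A) (X : Set (ℤ → A)) (hX : X = orbitClosure x) (hrec : RecurrentPt x)
    (a b : A) (ha : (fun _ : ℤ => a) ∈ X) (hne : X ≠ {fun _ : ℤ => a})
    (hmarker : ∀ s : A, s ≠ a →
      (WordIn X [a, s] → s = b) ∧ (WordIn X [s, a] → s = b)) :
    ∀ n : ℕ, 1 ≤ n →
      RightSpecial X (List.replicate n a) ∧ LeftSpecial X (List.replicate n a) :=
  stmt3_general x X hX hrec a ha hne
end

section
/- Let X be a subshift with limsup_{n→∞} c_X(n)/n < 3, and let ε = 3 − limsup_{n→∞} c_X(n)/n. Then there is N such that every interval [i, (6/ε)·i] with i ≥ N contains an integer n with c_X(n+1) − c_X(n) ≤ 2. Consequently there is a logarithmically syndetic sequence (n_k) (i.e., n_{k+1}/n_k bounded) with at most 2 right-special words of each length n_k. -/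
open Filter Topology MeasureTheory

variable {A : Type*} {B : Type*}

/-!
Every word of length `n` has a right extension and a right-special word has two, so
`c(n+1) - c(n) ≥ #RS(n)`. With `ε = 3 - limsup c(n)/n` we have `c(m) < (3 - ε/2) m` for large `m`;
if `c(m+1) - c(m) ≥ 3` held on all of `[i, K i]` with `K = 6/ε`, then `c` would gain
`3 (K - 1) i ≥ (3 - ε/2) K i` there, which is too much. Choosing one good length in each interval
`[n + 1, K (n + 1)]` gives a sequence whose consecutive ratios stay below `2 K + 1`.
-/

section Words

variable {X : Set (ℤ → A)}

lemma occursAt_iff {x : ℤ → A} {w : List A} {i : ℤ} :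
    occursAt x w i ↔ ∀ k (hk : k < w.length), x (i + k) = w[k] :=
  ⟨fun h k hk => h ⟨k, hk⟩, fun h k => h k k.isLt⟩

lemma WordIn.of_append {u v : List A} (h : WordIn X (u ++ v)) : WordIn X u := by
  obtain ⟨x, hx, i, ho⟩ := h
  refine ⟨x, hx, i, occursAt_iff.2 fun k hk => ?_⟩
  rw [occursAt_iff] at ho
  rw [← List.getElem_append_left hk]
  exact ho k (by simp; omega)

lemma WordIn.exists_append_singleton {w : List A} (h : WordIn X w) :
    ∃ c, WordIn X (w ++ [c]) := by
  obtain ⟨x, hx, i, ho⟩ := h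
  rw [occursAt_iff] at ho
  refine ⟨x (i + w.length), x, hx, i, occursAt_iff.2 fun k hk => ?_⟩
  rw [List.length_append, List.length_singleton] at hk
  rcases Nat.lt_or_ge k w.length with hlt | hge
  · rw [List.getElem_append_left hlt]; exact ho k hlt
  · obtain rfl : k = w.length := by omega
    simp

lemma RightSpecial.wordIn {w : List A} (h : RightSpecial X w) : WordIn X w :=
  let ⟨_, _, _, hw, _⟩ := h; hw.of_append

lemma langOf_finite [Finite A] (X : Set (ℤ → A)) (n : ℕ) : (langOf X n).Finite := by
  refine (Set.finite_range (List.ofFn : (Fin n → A) → List A)).subset ?_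
  rintro w ⟨rfl, -⟩
  exact ⟨fun i => w[(i : ℕ)], List.ofFn_getElem⟩

/-- The words of length `n + 1` are counted through the fibres of `List.dropLast`. -/
theorem complexity_add_ncard_RS_le [Finite A] (X : Set (ℤ → A)) (n : ℕ) :
    complexity X n + (RS X n).ncard ≤ complexity X (n + 1) := by
  classical
  set L := (langOf_finite X n).toFinset
  set L' := (langOf_finite X (n + 1)).toFinset
  have hRS : RS X n = ↑(L.filter (RightSpecial X)) := by
    ext w
    simp only [RS, Finset.coe_filter, Set.Finite.mem_toFinset, L, langOf, Set.mem_ofPred_eq]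
    exact ⟨fun ⟨hn, hw⟩ => ⟨⟨hn, hw.wordIn⟩, hw⟩, fun ⟨⟨hn, _⟩, hw⟩ => ⟨hn, hw⟩⟩
  have hmaps : Set.MapsTo List.dropLast (L' : Set (List A)) L := by
    intro u hu
    simp only [Finset.mem_coe, Set.Finite.mem_toFinset, L, L', langOf] at hu ⊢
    have hne : u ≠ [] := List.ne_nil_of_length_pos (by rw [hu.1]; omega)
    refine ⟨by simp [hu.1], ?_⟩
    exact (List.dropLast_append_getLast hne ▸ hu.2 : WordIn X _).of_append
  have hmem : ∀ w ∈ L, ∀ c, WordIn X (w ++ [c]) → w ++ [c] ∈ L'.filter (·.dropLast = w) := by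
    intro w hw c hc
    simp only [Set.Finite.mem_toFinset, L, langOf] at hw
    simp [L', langOf, hw.1, hc]
  have hfiber : ∀ w ∈ L,
      1 + (if RightSpecial X w then 1 else 0) ≤ (L'.filter (·.dropLast = w)).card := by
    intro w hw
    split_ifs with hspec
    · obtain ⟨a, b, hab, ha, hb⟩ := hspec
      exact Finset.one_lt_card.2
        ⟨_, hmem w hw a ha, _, hmem w hw b hb, by simpa using hab⟩
    · obtain ⟨c, hc⟩ := (by simpa [L, langOf] using hw : _ ∧ WordIn X w).2.exists_append_singleton
      exact Finset.card_pos.2 ⟨_, hmem w hw c hc⟩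
  calc complexity X n + (RS X n).ncard
      = ∑ w ∈ L, (1 + if RightSpecial X w then 1 else 0) := by
        rw [Finset.sum_add_distrib, Finset.sum_boole, hRS, Set.ncard_coe_finset, complexity,
          Set.ncard_eq_toFinset_card _ (langOf_finite X n)]
        simp [L]
    _ ≤ ∑ w ∈ L, (L'.filter (·.dropLast = w)).card := Finset.sum_le_sum hfiber
    _ = complexity X (n + 1) := by
        rw [← Finset.card_eq_sum_card_fiberwise hmaps, complexity,
          Set.ncard_eq_toFinset_card _ (langOf_finite X (n + 1))]

end Words

lemma three_mul_sub_le_of_increments (f : ℕ → ℕ) {i j : ℕ}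
    (h : ∀ m, i ≤ m → m < j → f m + 3 ≤ f (m + 1)) : 3 * (j - i) ≤ f j := by
  induction j with
  | zero => simp
  | succ j ih =>
    rcases Nat.lt_or_ge j i with hji | hij
    · omega
    · have := ih fun m him hmj => h m him (by omega)
      have := h j hij (by omega)
      omega

theorem eventually_exists_increment_le_two (f : ℕ → ℕ) {c K : ℝ} (hc : c < 3)
    (hK : 3 ≤ (3 - c) * K) (hf : ∀ᶠ m in atTop, (f m : ℝ) / m < c) :
    ∀ᶠ i : ℕ in atTop, ∃ m : ℕ, i ≤ m ∧ (m : ℝ) ≤ K * i ∧ f (m + 1) ≤ f m + 2 := by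
  obtain ⟨N, hN⟩ := eventually_atTop.mp hf
  filter_upwards [eventually_ge_atTop N, eventually_gt_atTop 0] with i hiN hi
  by_contra! hcon
  have hc_pos : 0 < c := (div_nonneg (Nat.cast_nonneg _) (Nat.cast_nonneg _)).trans_lt (hN N le_rfl)
  have hK_one : 1 < K := by nlinarith
  have hi' : (0 : ℝ) < i := by exact_mod_cast hi
  set j := ⌊K * i⌋₊ + 1
  have hj : K * i < j := by simpa [j] using Nat.lt_floor_add_one (K * i)
  have hij : i ≤ j := by exact_mod_cast (show (i : ℝ) ≤ j by nlinarith)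
  have hgrowth : 3 * (j - i) ≤ f j := three_mul_sub_le_of_increments f fun m him hmj =>
    hcon m him ((Nat.cast_le.2 (Nat.lt_succ_iff.1 hmj)).trans (Nat.floor_le (by positivity)))
  have hfj : (f j : ℝ) < c * j := by
    have := hN j (by omega)
    rwa [div_lt_iff₀ (by positivity)] at this
  have : 3 * ((j : ℝ) - i) < c * j := by
    calc 3 * ((j : ℝ) - i) = ((3 * (j - i) : ℕ) : ℝ) := by push_cast [Nat.cast_sub hij]; ring
      _ ≤ f j := by exact_mod_cast hgrowth
      _ < c * j := hfj
  nlinarith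

theorem exists_strictMono_ratio_lt_of_eventually {P : ℕ → Prop} {K : ℝ}
    (h : ∀ᶠ i : ℕ in atTop, ∃ m : ℕ, i ≤ m ∧ (m : ℝ) ≤ K * i ∧ P m) :
    ∃ (nk : ℕ → ℕ) (M : ℝ), StrictMono nk ∧ (∀ k, 0 < nk k) ∧
      (∀ k, (nk (k + 1) : ℝ) / (nk k : ℝ) < M) ∧ ∀ k, P (nk k) := by
  obtain ⟨N, hN⟩ := eventually_atTop.mp (h.and (eventually_gt_atTop 0))
  choose g hg_ge hg_le hP using fun i => (hN (max i N) (le_max_right _ _)).1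
  have hNpos : 0 < N := (hN N le_rfl).2
  obtain ⟨nk, hnk_zero, hnk_succ⟩ : ∃ nk : ℕ → ℕ, nk 0 = g 0 ∧ ∀ k, nk (k + 1) = g (nk k + 1) :=
    ⟨fun k => Nat.rec (g 0) (fun _ p => g (p + 1)) k, rfl, fun _ => rfl⟩
  have hnk_ge : ∀ k, N ≤ nk k := by
    rintro (_ | k) <;> simp only [hnk_zero, hnk_succ] <;> exact (le_max_right _ _).trans (hg_ge _)
  have hnk_lt : ∀ k, nk k < nk (k + 1) := fun k => by
    rw [hnk_succ]; exact (Nat.lt_succ_self _).trans_le ((le_max_left _ _).trans (hg_ge _))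
  refine ⟨nk, 2 * K + 1, strictMono_nat_of_lt_succ hnk_lt, fun k => hNpos.trans_le (hnk_ge k),
    ?_, ?_⟩
  · intro k
    have hpos : (1 : ℝ) ≤ nk k := Nat.one_le_cast.2 (hNpos.trans_le (hnk_ge k))
    have hnext_le := hg_le (nk k + 1)
    have hnext_ge := hg_ge (nk k + 1)
    rw [max_eq_left (by linarith [hnk_ge k]), ← hnk_succ] at hnext_le hnext_ge
    have hnext_ge' : (nk k : ℝ) + 1 ≤ nk (k + 1) := by exact_mod_cast hnext_ge
    push_cast at hnext_le
    have hK : 0 ≤ K := by nlinarith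
    rw [div_lt_iff₀ (by linarith)]
    nlinarith
  · rintro (_ | k)
    · exact hnk_zero ▸ hP 0
    · exact hnk_succ k ▸ hP _

theorem stmt11_general [Fintype A]
    (X : Set (ℤ → A))
    (hbd : IsBoundedUnder (· ≤ ·) atTop (fun m : ℕ => (complexity X m : ℝ) / m))
    (hlim : limsup (fun m : ℕ => (complexity X m : ℝ) / m) atTop < 3) :
    (∃ N : ℕ, ∀ i : ℕ, N ≤ i → ∃ m : ℕ,
        (i : ℝ) ≤ m ∧
        (m : ℝ) ≤ (6 / (3 - limsup (fun m : ℕ => (complexity X m : ℝ) / m) atTop)) * i ∧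
        complexity X (m + 1) ≤ complexity X m + 2) ∧
    ∃ (nk : ℕ → ℕ) (M : ℝ), StrictMono nk ∧ (∀ k, 0 < nk k) ∧
      (∀ k, (nk (k + 1) : ℝ) / (nk k : ℝ) < M) ∧ ∀ k, (RS X (nk k)).ncard ≤ 2 := by
  set L := limsup (fun m : ℕ => (complexity X m : ℝ) / m) atTop
  have hgood := eventually_exists_increment_le_two (complexity X) (c := (L + 3) / 2)
    (K := 6 / (3 - L)) (by linarith) (by rw [← mul_div_assoc, le_div_iff₀ (by linarith)]; linarith)
    (eventually_lt_of_limsup_lt (by linarith) hbd)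
  refine ⟨?_, ?_⟩
  · obtain ⟨N, hN⟩ := eventually_atTop.mp hgood
    exact ⟨N, fun i hi => (hN i hi).imp fun m ⟨him, hmK, hm⟩ => ⟨Nat.cast_le.2 him, hmK, hm⟩⟩
  · obtain ⟨nk, M, hmono, hpos, hratio, hincr⟩ := exists_strictMono_ratio_lt_of_eventually hgood
    refine ⟨nk, M, hmono, hpos, hratio, fun k => ?_⟩
    have := complexity_add_ncard_RS_le X (nk k)
    have := hincr k
    omega

theorem stmt11 [Fintype A] [TopologicalSpace A] [DiscreteTopology A]
    (X : Set (ℤ → A)) (hX : IsSubshift X)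
    (hbd : IsBoundedUnder (· ≤ ·) atTop (fun m : ℕ => (complexity X m : ℝ) / m))
    (hlim : limsup (fun m : ℕ => (complexity X m : ℝ) / m) atTop < 3) :
    (∃ N : ℕ, ∀ i : ℕ, N ≤ i → ∃ m : ℕ,
        (i : ℝ) ≤ m ∧
        (m : ℝ) ≤ (6 / (3 - limsup (fun m : ℕ => (complexity X m : ℝ) / m) atTop)) * i ∧
        complexity X (m + 1) ≤ complexity X m + 2) ∧
    ∃ (nk : ℕ → ℕ) (M : ℝ), StrictMono nk ∧ (∀ k, 0 < nk k) ∧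
      (∀ k, (nk (k + 1) : ℝ) / (nk k : ℝ) < M) ∧ ∀ k, (RS X (nk k)).ncard ≤ 2 :=
  stmt11_general X hbd hlim
end

section
/- Let x ∈ {0,1,...,j}^Z (j ≥ 3) be of the form x = 0^∞ . 1^{n_1} 2^{n_2} ... (j−1)^{n_{j−1}} 1^{n_j} 2^{n_{j+1}} ... cycling through symbols 1,...,j−1 with exponents n_1 < n_2 < ..., and let X be its orbit closure. Then for every n ≥ 1, the constant words 0^n, 1^n, ..., (j−1)^n are all right-special in X, and every right-special word of X of length n is either constant or contains exactly two distinct symbols p, q with q following p cyclically. -/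
open Filter Topology MeasureTheory

variable {A : Type*} {B : Type*}

/-! The symbol of `x` changes exactly at the positions `S k`, and the gaps `n k = S (k + 1) - S k`
between consecutive changes are pairwise distinct. A right-special word occurs at two different
places; if it contained two changes of symbol, the gap between two consecutive ones would identify
the block, hence the place. So it contains at most one change, and a change right after a run of
`0`s can only be the change at position `0`, which occurs once. Conversely `0^m` is followed both
by `0` and by `1`, and a block of symbol `a` longer than `m` shows `a^m` followed by `a` and by
the next symbol of the cycle. -/

open Function List

lemma occursAt_iff_wordAt_eq {x : ℤ → A} {w : List A} {i : ℤ} :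
    occursAt x w i ↔ wordAt x i w.length = w := by
  conv_rhs => rhs; rw [← ofFn_get w]
  rw [wordAt, ofFn_inj, funext_iff]
  rfl

lemma wordAt_add (x : ℤ → A) (i : ℤ) (r s : ℕ) :
    wordAt x i (r + s) = wordAt x i r ++ wordAt x (i + r) s := by
  simp only [wordAt, ofFn_add, Fin.val_castLE, Fin.val_natAdd, Nat.cast_add, add_assoc]

lemma wordAt_succ (x : ℤ → A) (i : ℤ) (m : ℕ) :
    wordAt x i (m + 1) = wordAt x i m ++ [x (i + m)] := by
  rw [wordAt_add]
  simp [wordAt]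

lemma wordAt_eq_replicate_iff {x : ℤ → A} {i : ℤ} {m : ℕ} {a : A} :
    wordAt x i m = replicate m a ↔ ∀ t < m, x (i + t) = a := by
  simp [wordAt, eq_replicate_iff, mem_ofFn, Fin.forall_iff]

lemma apply_add_sub_eq_of_wordAt_eq {x : ℤ → A} {i i' : ℤ} {m : ℕ}
    (h : wordAt x i m = wordAt x i' m) {r : ℤ} (hir : i ≤ r) (hrm : r < i + m) :
    x (r + (i' - i)) = x r := by
  have := congrFun (ofFn_inj.1 h) ⟨(r - i).toNat, by omega⟩
  simp only [Int.toNat_sub_of_le hir] at this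
  rw [show r + (i' - i) = i' + (r - i) by ring, ← this]
  congr 1; ring

lemma wordIn_orbitClosure [TopologicalSpace A] [DiscreteTopology A] {x : ℤ → A} {w : List A} :
    WordIn (orbitClosure x) w ↔ ∃ i : ℤ, occursAt x w i := by
  constructor
  · rintro ⟨y, hy, i, hocc⟩
    have hU : IsOpen {z : ℤ → A | occursAt z w i} := by
      simp only [occursAt, Set.ofPred_forall]
      refine isOpen_iInter_of_finite fun k => ?_
      change IsOpen ((fun z : ℤ → A => z (i + (k : ℕ))) ⁻¹' {w.get k})
      exact (isOpen_discrete _).preimage (continuous_apply _)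
    obtain ⟨z, hz, q, rfl⟩ := mem_closure_iff.1 hy _ hU hocc
    exact ⟨i + q, fun k => by rw [← hz k, shiftBy, add_right_comm]⟩
  · rintro ⟨i, hocc⟩
    exact ⟨x, subset_closure ⟨0, by ext; simp [shiftBy]⟩, i, hocc⟩

lemma rightSpecial_orbitClosure_iff [TopologicalSpace A] [DiscreteTopology A]
    {x : ℤ → A} {w : List A} :
    RightSpecial (orbitClosure x) w ↔ ∃ i₁ i₂ : ℤ, wordAt x i₁ w.length = w ∧
      wordAt x i₂ w.length = w ∧ x (i₁ + w.length) ≠ x (i₂ + w.length) := by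
  have hext : ∀ a, WordIn (orbitClosure x) (w ++ [a]) ↔
      ∃ i : ℤ, wordAt x i w.length = w ∧ x (i + w.length) = a := by
    intro a
    simp [wordIn_orbitClosure, occursAt_iff_wordAt_eq, wordAt_succ]
  simp only [RightSpecial, hext]
  constructor
  · rintro ⟨a, b, hab, ⟨i₁, h₁, rfl⟩, ⟨i₂, h₂, rfl⟩⟩
    exact ⟨i₁, i₂, h₁, h₂, hab⟩
  · rintro ⟨i₁, i₂, h₁, h₂, hne⟩
    exact ⟨_, _, hne, ⟨i₁, h₁, rfl⟩, ⟨i₂, h₂, rfl⟩⟩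

section Cuts

variable {x : ℤ → A} {S : ℕ → ℤ}

def IsCut (x : ℤ → A) (p : ℤ) : Prop := x (p - 1) ≠ x p

lemma apply_add_eq_of_forall_not_isCut {i : ℤ} {ℓ : ℕ}
    (h : ∀ t : ℕ, 0 < t → t < ℓ → ¬ IsCut x (i + t)) : ∀ t < ℓ, x (i + t) = x i := by
  intro t
  induction t with
  | zero => simp
  | succ t ih =>
    intro ht
    have hcut := h (t + 1) t.succ_pos ht
    rw [IsCut, not_not, Nat.cast_succ, ← add_assoc, add_sub_cancel_right] at hcut
    rw [Nat.cast_succ, ← add_assoc, ← hcut, ih (by omega)]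

lemma isCut_add_iff {a b d p : ℤ} (hagree : ∀ r, a ≤ r → r < b → x (r + d) = x r)
    (hap : a < p) (hpb : p < b) : IsCut x (p + d) ↔ IsCut x p := by
  rw [IsCut, IsCut, show p + d - 1 = p - 1 + d by ring, hagree (p - 1) (by omega) (by omega),
    hagree p hap.le hpb]

lemma exists_eq_and_succ_eq_of_consecutive_isCut (hS : StrictMono S)
    (hcut : ∀ p, IsCut x p ↔ p ∈ Set.range S) {p q : ℤ} (hp : IsCut x p) (hq : IsCut x q)
    (hpq : p < q) (hbetween : ∀ r, p < r → r < q → ¬ IsCut x r) :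
    ∃ k, S k = p ∧ S (k + 1) = q := by
  obtain ⟨k, rfl⟩ := (hcut p).1 hp
  obtain ⟨l, rfl⟩ := (hcut q).1 hq
  refine ⟨k, rfl, ?_⟩
  obtain hkl | hkl := (Nat.succ_le_of_lt (hS.lt_iff_lt.1 hpq)).eq_or_lt
  · exact congrArg S hkl
  · exact absurd ((hcut _).2 ⟨k + 1, rfl⟩) (hbetween _ (hS k.lt_succ_self) (hS hkl))

lemma eq_zero_of_isCut_of_isCut (hS : StrictMono S) (hcut : ∀ p, IsCut x p ↔ p ∈ Set.range S)
    (hgap : Injective fun k => S (k + 1) - S k) {a b d p q : ℤ}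
    (hagree : ∀ r, a ≤ r → r < b → x (r + d) = x r) (hap : a < p) (hpq : p < q) (hqb : q < b)
    (hp : IsCut x p) (hq : IsCut x q) : d = 0 := by
  obtain ⟨q', ⟨hpq', hq'⟩, hleast⟩ := Int.exists_least_of_bdd
    (P := fun r => p < r ∧ IsCut x r) ⟨p, fun r hr => hr.1.le⟩ ⟨q, hpq, hq⟩
  have hq'q : q' ≤ q := hleast q ⟨hpq, hq⟩
  have hbetween : ∀ r, p < r → r < q' → ¬ IsCut x r :=
    fun r hpr hrq' hr => (hleast r ⟨hpr, hr⟩).not_gt hrq'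
  have htransfer : ∀ r, p ≤ r → r ≤ q' → (IsCut x (r + d) ↔ IsCut x r) :=
    fun r hpr hrq' => isCut_add_iff hagree (by omega) (by omega)
  obtain ⟨k, hk, hk'⟩ := exists_eq_and_succ_eq_of_consecutive_isCut hS hcut hp hq' hpq' hbetween
  obtain ⟨l, hl, hl'⟩ := exists_eq_and_succ_eq_of_consecutive_isCut (p := p + d) (q := q' + d)
    hS hcut ((htransfer p le_rfl hpq'.le).2 hp) ((htransfer q' hpq'.le le_rfl).2 hq')
    (by omega) fun r hpr hrq => by
      rw [← sub_add_cancel r d, htransfer _ (by omega) (by omega)]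
      exact hbetween _ (by omega) (by omega)
  have hkl : k = l := hgap (by simp only [hk, hk', hl, hl']; ring)
  subst hkl
  omega

lemma eq_of_isCut_add_of_isCut_add (hS : StrictMono S)
    (hcut : ∀ p, IsCut x p ↔ p ∈ Set.range S) (hgap : Injective fun k => S (k + 1) - S k)
    {i d : ℤ} {m : ℕ} (hagree : ∀ r, i ≤ r → r < i + m → x (r + d) = x r) (hd : d ≠ 0)
    {t T : ℕ} (ht0 : 0 < t) (htm : t < m) (hT0 : 0 < T) (hTm : T < m)
    (ht : IsCut x (i + t)) (hT : IsCut x (i + T)) : t = T := by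
  by_contra htT
  rcases Nat.lt_or_gt_of_ne htT with hlt | hlt
  · exact hd (eq_zero_of_isCut_of_isCut hS hcut hgap hagree
      (by omega) (by omega) (by omega) ht hT)
  · exact hd (eq_zero_of_isCut_of_isCut hS hcut hgap hagree
      (by omega) (by omega) (by omega) hT ht)

end Cuts

/-- `x = ⋯ z z z . c₀^{S 1 - S 0} c₁^{S 2 - S 1} c₂^{S 3 - S 2} ⋯`, the `k`-th block occupying
the positions `[S k, S (k + 1))`, with no two adjacent blocks of the same symbol. -/
structure IsBlockSequence (x : ℤ → A) (z : A) (c : ℕ → A) (S : ℕ → ℤ) : Prop where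
  start_eq_zero : S 0 = 0
  strictMono : StrictMono S
  apply_of_neg : ∀ p < 0, x p = z
  apply_of_mem_block : ∀ k p, S k ≤ p → p < S (k + 1) → x p = c k
  symbol_ne : ∀ k, c k ≠ z
  symbol_succ_ne : ∀ k, c (k + 1) ≠ c k

namespace IsBlockSequence

variable {x : ℤ → A} {z : A} {c : ℕ → A} {S : ℕ → ℤ}

lemma natCast_le_start (hx : IsBlockSequence x z c S) : ∀ k : ℕ, (k : ℤ) ≤ S k
  | 0 => hx.start_eq_zero.ge
  | k + 1 => by
    have := hx.natCast_le_start k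
    have := hx.strictMono (show k < k + 1 by omega)
    push_cast
    omega

lemma exists_mem_block (hx : IsBlockSequence x z c S) {p : ℤ} (hp : 0 ≤ p) :
    ∃ k, S k ≤ p ∧ p < S (k + 1) := by
  have hex : ∃ k, p < S k := ⟨p.toNat + 1, by have := hx.natCast_le_start (p.toNat + 1); omega⟩
  obtain ⟨k, hk⟩ : ∃ k, Nat.find hex = k + 1 :=
    Nat.exists_eq_succ_of_ne_zero fun h => by
      have := Nat.find_spec hex
      rw [h, hx.start_eq_zero] at this
      omega
  refine ⟨k, not_lt.1 (Nat.find_min hex (by omega)), hk ▸ Nat.find_spec hex⟩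

lemma apply_start (hx : IsBlockSequence x z c S) (k : ℕ) : x (S k) = c k :=
  hx.apply_of_mem_block k _ le_rfl (hx.strictMono k.lt_succ_self)

lemma apply_start_sub_one (hx : IsBlockSequence x z c S) (k : ℕ) : x (S (k + 1) - 1) = c k :=
  hx.apply_of_mem_block k _ (by linarith [hx.strictMono k.lt_succ_self]) (by omega)

lemma apply_eq_iff (hx : IsBlockSequence x z c S) {p : ℤ} : x p = z ↔ p < 0 := by
  refine ⟨fun hxp => not_le.1 fun hp => ?_, hx.apply_of_neg p⟩
  obtain ⟨k, hkp, hpk⟩ := hx.exists_mem_block hp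
  exact hx.symbol_ne k (hx.apply_of_mem_block k p hkp hpk ▸ hxp)

lemma isCut_iff (hx : IsBlockSequence x z c S) (p : ℤ) : IsCut x p ↔ p ∈ Set.range S := by
  constructor
  · intro hp
    rcases lt_or_ge p 0 with hneg | hnonneg
    · exact absurd (by rw [hx.apply_of_neg _ hneg, hx.apply_of_neg _ (by omega)]) hp
    rcases hnonneg.eq_or_lt with rfl | hpos
    · exact ⟨0, hx.start_eq_zero⟩
    obtain ⟨k, hkp, hpk⟩ := hx.exists_mem_block (p := p - 1) (by omega)
    refine ⟨k + 1, le_antisymm ?_ (by omega)⟩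
    by_contra! hlt
    exact hp (by rw [hx.apply_of_mem_block k _ hkp hpk, hx.apply_of_mem_block k p (by omega) hlt])
  · rintro ⟨_ | k, rfl⟩
    · rw [IsCut, hx.start_eq_zero, hx.apply_of_neg _ (by norm_num), ← hx.start_eq_zero,
        hx.apply_start]
      exact (hx.symbol_ne 0).symm
    · rw [IsCut, hx.apply_start_sub_one, hx.apply_start]
      exact (hx.symbol_succ_ne k).symm

lemma eq_zero_of_apply_add_eq (hx : IsBlockSequence x z c S) {a b d : ℤ}
    (hagree : ∀ r, a ≤ r → r < b → x (r + d) = x r) (ha : a < 0) (hb : 0 < b) : d = 0 := by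
  have hz : x (-1 + d) = z := by
    rw [hagree _ (by omega) (by omega), hx.apply_of_neg _ (by norm_num)]
  have hc : x (0 + d) ≠ z := by
    rw [hagree _ (by omega) hb, ← hx.start_eq_zero, hx.apply_start]
    exact hx.symbol_ne 0
  rw [hx.apply_eq_iff] at hz
  rw [Ne, hx.apply_eq_iff] at hc
  omega

variable [TopologicalSpace A] [DiscreteTopology A]

lemma rightSpecial_replicate (hx : IsBlockSequence x z c S) (m : ℕ) :
    RightSpecial (orbitClosure x) (replicate m z) := by
  refine rightSpecial_orbitClosure_iff.2 ⟨-m - 1, -m, ?_, ?_, ?_⟩ <;>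
    simp only [length_replicate, wordAt_eq_replicate_iff]
  · exact fun t ht => hx.apply_of_neg _ (by omega)
  · exact fun t ht => hx.apply_of_neg _ (by omega)
  · rw [show -(m : ℤ) - 1 + m = -1 by ring, neg_add_cancel, hx.apply_of_neg _ (by norm_num),
      ← hx.start_eq_zero, hx.apply_start]
    exact (hx.symbol_ne 0).symm

lemma rightSpecial_replicate_symbol (hx : IsBlockSequence x z c S) {k m : ℕ}
    (hm : (m : ℤ) < S (k + 1) - S k) : RightSpecial (orbitClosure x) (replicate m (c k)) := by
  refine rightSpecial_orbitClosure_iff.2 ⟨S k, S (k + 1) - m, ?_, ?_, ?_⟩ <;>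
    simp only [length_replicate, wordAt_eq_replicate_iff]
  · exact fun t ht => hx.apply_of_mem_block k _ (by omega) (by omega)
  · exact fun t ht => hx.apply_of_mem_block k _ (by omega) (by omega)
  · rw [sub_add_cancel, hx.apply_of_mem_block k _ (by omega) (by omega), hx.apply_start]
    exact (hx.symbol_succ_ne k).symm

lemma eq_replicate_or_eq_replicate_append_replicate (hx : IsBlockSequence x z c S)
    (hgap : Injective fun k => S (k + 1) - S k) {w : List A}
    (hw : RightSpecial (orbitClosure x) w) :
    (∃ a, w = replicate w.length a) ∨
      ∃ k r s, 0 < r ∧ 0 < s ∧ w = replicate r (c k) ++ replicate s (c (k + 1)) := by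
  obtain ⟨i₁, i₂, h₁, h₂, hne⟩ := rightSpecial_orbitClosure_iff.1 hw
  set m := w.length
  have hagree : ∀ r, i₁ ≤ r → r < i₁ + m → x (r + (i₂ - i₁)) = x r :=
    fun r => apply_add_sub_eq_of_wordAt_eq (h₁.trans h₂.symm)
  have hd : i₂ - i₁ ≠ 0 := fun hd => hne (by rw [sub_eq_zero.1 hd])
  by_cases hcut : ∃ T : ℕ, 0 < T ∧ T < m ∧ IsCut x (i₁ + T)
  swap
  · push Not at hcut
    exact .inl ⟨x i₁, h₁ ▸ wordAt_eq_replicate_iff.2 (apply_add_eq_of_forall_not_isCut hcut)⟩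
  right
  obtain ⟨T, hT0, hTm, hT⟩ := hcut
  have hunique : ∀ t : ℕ, 0 < t → t < m → IsCut x (i₁ + t) → t = T := fun t ht0 htm ht =>
    eq_of_isCut_add_of_isCut_add hx.strictMono hx.isCut_iff hgap hagree hd ht0 htm hT0 hTm ht hT
  obtain ⟨_ | k, hk⟩ := (hx.isCut_iff _).1 hT
  · rw [hx.start_eq_zero] at hk
    exact absurd (hx.eq_zero_of_apply_add_eq hagree (by omega) (by omega)) hd
  have hleft : wordAt x i₁ T = replicate T (c k) := by
    have hconst := apply_add_eq_of_forall_not_isCut (i := i₁) (ℓ := T)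
      fun t ht0 htT ht => (hunique t ht0 (by omega) ht).not_lt htT
    rw [wordAt_eq_replicate_iff]
    intro t ht
    rw [hconst t ht, ← hconst (T - 1) (by omega), ← hx.apply_start_sub_one, hk]
    congr 1
    omega
  have hright : wordAt x (i₁ + T) (m - T) = replicate (m - T) (c (k + 1)) := by
    have hconst := apply_add_eq_of_forall_not_isCut (i := i₁ + T) (ℓ := m - T)
      fun t ht0 htm ht => by
        have := hunique (T + t) (by omega) (by omega) (by rwa [Nat.cast_add, ← add_assoc])
        omega
    rw [wordAt_eq_replicate_iff]
    intro t ht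
    rw [hconst t ht, ← hk, hx.apply_start]
  refine ⟨k, T, m - T, hT0, by omega, ?_⟩
  rw [← hleft, ← hright, ← wordAt_add, Nat.add_sub_cancel' hTm.le, h₁]

end IsBlockSequence

lemma Nat.add_one_mod_ne_mod {d : ℕ} (hd : 2 ≤ d) (k : ℕ) : (k + 1) % d ≠ k % d := by
  intro h
  have hdvd : d ∣ 1 := by simpa using (Nat.modEq_iff_dvd' k.le_succ).1 h.symm
  have := Nat.le_of_dvd one_pos hdvd
  omega

section CyclicBlocks

variable {j : ℕ} {n S : ℕ → ℕ} {x : ℤ → Fin (j + 1)}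

lemma val_apply_start (hn0 : ∀ k, 0 < n k) (hS : ∀ k, S (k + 1) = S k + n k)
    (hpos : ∀ k p : ℕ, S k ≤ p → p < S (k + 1) → (x (p : ℤ) : ℕ) = k % (j - 1) + 1) (k : ℕ) :
    (x (S k) : ℕ) = k % (j - 1) + 1 :=
  hpos k _ le_rfl (by rw [hS k]; exact Nat.lt_add_of_pos_right (hn0 k))

lemma isBlockSequence_of_cyclic (hj : 3 ≤ j) (hn0 : ∀ k, 0 < n k) (hS0 : S 0 = 0)
    (hS : ∀ k, S (k + 1) = S k + n k) (hneg : ∀ i : ℤ, i < 0 → (x i : ℕ) = 0)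
    (hpos : ∀ k p : ℕ, S k ≤ p → p < S (k + 1) → (x (p : ℤ) : ℕ) = k % (j - 1) + 1) :
    IsBlockSequence x 0 (fun k => x (S k)) (fun k => (S k : ℤ)) where
  start_eq_zero := by simp [hS0]
  strictMono := strictMono_nat_of_lt_succ fun k => by
    rw [hS k, Nat.cast_lt]
    exact Nat.lt_add_of_pos_right (hn0 k)
  apply_of_neg p hp := Fin.ext (hneg p hp)
  apply_of_mem_block k p hkp hpk := by
    lift p to ℕ using (by omega)
    exact Fin.ext <| (hpos k p (by exact_mod_cast hkp) (by exact_mod_cast hpk)).trans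
      (val_apply_start hn0 hS hpos k).symm
  symbol_ne k := Fin.ne_of_val_ne (by rw [val_apply_start hn0 hS hpos]; simp)
  symbol_succ_ne k := Fin.ne_of_val_ne <| by
    rw [val_apply_start hn0 hS hpos, val_apply_start hn0 hS hpos]
    exact fun h => Nat.add_one_mod_ne_mod (d := j - 1) (by omega) k (by omega)

lemma exists_apply_start_eq (hj : 2 ≤ j) (hn : StrictMono n)
    (hsym : ∀ k, (x (S k) : ℕ) = k % (j - 1) + 1) {a : Fin (j + 1)} (ha0 : a ≠ 0)
    (ha : (a : ℕ) < j) (m : ℕ) : ∃ k, x (S k) = a ∧ m < n k := by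
  -- the block index is chosen larger than `m`, and `k ≤ n k`
  refine ⟨((a : ℕ) - 1) + (j - 1) * (m + 1), Fin.ext ?_, ?_⟩
  · rw [hsym, Nat.add_mul_mod_self_left, Nat.mod_eq_of_lt (by omega)]
    have := Fin.val_ne_of_ne ha0
    simp only [Fin.val_zero] at this
    omega
  · have := Nat.le_mul_of_pos_left (m + 1) (show 0 < j - 1 by omega)
    exact lt_of_lt_of_le (by omega) hn.le_apply

end CyclicBlocks

theorem stmt17 (j : ℕ) (hj : 3 ≤ j)
    (n : ℕ → ℕ) (hn : StrictMono n) (hn0 : ∀ k, 0 < n k)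
    (S : ℕ → ℕ) (hS0 : S 0 = 0) (hS : ∀ k, S (k + 1) = S k + n k)
    (x : ℤ → Fin (j + 1))
    (hneg : ∀ i : ℤ, i < 0 → (x i : ℕ) = 0)
    (hpos : ∀ k p : ℕ, S k ≤ p → p < S (k + 1) → (x (p : ℤ) : ℕ) = k % (j - 1) + 1)
    (X : Set (ℤ → Fin (j + 1))) (hX : X = orbitClosure x) :
    (∀ m : ℕ, 1 ≤ m → ∀ a : Fin (j + 1), (a : ℕ) < j →
      RightSpecial X (List.replicate m a)) ∧
    (∀ w : List (Fin (j + 1)), RightSpecial X w →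
      (∃ a : Fin (j + 1), w = List.replicate w.length a) ∨
      (∃ p q : Fin (j + 1), 1 ≤ (p : ℕ) ∧ (p : ℕ) ≤ j - 1 ∧
        (q : ℕ) = (p : ℕ) % (j - 1) + 1 ∧ {a : Fin (j + 1) | a ∈ w} = {p, q})) := by
  subst hX
  have hsym := val_apply_start hn0 hS hpos
  have hx := isBlockSequence_of_cyclic hj hn0 hS0 hS hneg hpos
  have hgap : Injective fun k => ((S (k + 1) : ℕ) : ℤ) - S k :=
    fun k l h => hn.injective (by simpa [hS] using h)
  refine ⟨fun m _ a ha => ?_, fun w hw => ?_⟩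
  · obtain rfl | ha0 := eq_or_ne a 0
    · exact hx.rightSpecial_replicate m
    obtain ⟨k, rfl, hmk⟩ := exists_apply_start_eq (by omega) hn hsym ha0 ha m
    exact hx.rightSpecial_replicate_symbol (by push_cast [hS]; omega)
  · rcases hx.eq_replicate_or_eq_replicate_append_replicate hgap hw with h | ⟨k, r, s, hr, hs, rfl⟩
    · exact .inl h
    refine .inr ⟨x (S k), x (S (k + 1)), ?_, ?_, ?_, ?_⟩
    · rw [hsym]; omega
    · rw [hsym]; have := Nat.mod_lt k (show 0 < j - 1 by omega); omega
    · rw [hsym, hsym, Nat.mod_add_mod]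
    · ext a; simp [hr.ne', hs.ne']
end
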